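/- Let M be a right R-module and N a left R-module. The following are equivalent: (1) N is absolutely M-pure; (2) the natural map M ⊗ N → M ⊗ E(N) is a monomorphism, where E(N) is the injective hull of N; (3) there exists an absolutely pure extension E of N such that M ⊗ N → M ⊗ E is a monomorphism. -/

import Mathlib

universe u

open LinearMap MulOpposite

/-! Character module -/

/-- The character group `M⁺ = Hom_ℤ(M, ℚ/ℤ)`. -/
abbrev CharMod (M : Type u) [AddCommGroup M] : Type u := M →+ AddCircle (1 : ℚ)

/-- If `M` is a left `S`-module, then `M⁺` is a right `S`-module via `(f • r) m = f (r • m)`. -/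
instance CharMod.moduleRight (S : Type u) [Ring S] (M : Type u) [AddCommGroup M]
    [Module S M] : Module Sᵐᵒᵖ (CharMod M) where
  smul r f := f.comp (DistribMulAction.toAddMonoidHom M (unop r))
  one_smul f := by
    apply AddMonoidHom.ext; intro m
    show f ((unop (1 : Sᵐᵒᵖ)) • m) = f m
    simp
  mul_smul r s f := by
    apply AddMonoidHom.ext; intro m
    show f ((unop (r * s)) • m) = f ((unop s) • ((unop r) • m))
    simp [mul_smul]
  smul_zero r := by apply AddMonoidHom.ext; intro m; rfl
  smul_add r f g := by apply AddMonoidHom.ext; intro m; rfl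
  add_smul r s f := by
    apply AddMonoidHom.ext; intro m
    show f ((unop (r + s)) • m) = f ((unop r) • m) + f ((unop s) • m)
    rw [unop_add, add_smul, map_add]
  zero_smul f := by
    apply AddMonoidHom.ext; intro m
    show f ((unop (0 : Sᵐᵒᵖ)) • m) = 0
    simp

/-- If `M` is a right `S`-module, then `M⁺` is a left `S`-module via `(r • f) m = f (m • r)`. -/
instance CharMod.moduleLeft (S : Type u) [Ring S] (M : Type u) [AddCommGroup M]
    [Module Sᵐᵒᵖ M] : Module S (CharMod M) where
  smul r f := f.comp (DistribMulAction.toAddMonoidHom M (op r))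
  one_smul f := by
    apply AddMonoidHom.ext; intro m
    show f ((op (1 : S)) • m) = f m
    simp
  mul_smul r s f := by
    apply AddMonoidHom.ext; intro m
    show f ((op (r * s)) • m) = f ((op s) • ((op r) • m))
    rw [← mul_smul, ← op_mul]
  smul_zero r := by apply AddMonoidHom.ext; intro m; rfl
  smul_add r f g := by apply AddMonoidHom.ext; intro m; rfl
  add_smul r s f := by
    apply AddMonoidHom.ext; intro m
    show f ((op (r + s)) • m) = f ((op r) • m) + f ((op s) • m)
    rw [op_add, add_smul, map_add]
  zero_smul f := by
    apply AddMonoidHom.ext; intro m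
    show f ((op (0 : S)) • m) = 0
    simp

/-! Tensor product of a right module and a left module over a (possibly noncommutative) ring -/

section Tensor

variable (S : Type u) [Ring S]

/-- The bilinearity relations defining `M ⊗_S N` as a quotient of `M ⊗_ℤ N`. -/
def tensorRel (M N : Type u) [AddCommGroup M] [Module Sᵐᵒᵖ M] [AddCommGroup N] [Module S N] :
    Submodule ℤ (TensorProduct ℤ M N) :=
  Submodule.span ℤ {x | ∃ (m : M) (r : S) (n : N),
    x = (op r • m) ⊗ₜ[ℤ] n - m ⊗ₜ[ℤ] (r • n)}

/-- `M ⊗_S N` for a right `S`-module `M` and a left `S`-module `N`. -/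
def RTensor (M N : Type u) [AddCommGroup M] [Module Sᵐᵒᵖ M] [AddCommGroup N] [Module S N] :
    Type u := TensorProduct ℤ M N ⧸ tensorRel S M N

noncomputable instance (M N : Type u) [AddCommGroup M] [Module Sᵐᵒᵖ M] [AddCommGroup N] [Module S N] :
    AddCommGroup (RTensor S M N) :=
  inferInstanceAs (AddCommGroup (TensorProduct ℤ M N ⧸ tensorRel S M N))

/-- Functoriality of `M ⊗_S -` in the left-module variable. -/
noncomputable def rTensorMap (M : Type u) [AddCommGroup M] [Module Sᵐᵒᵖ M] {N B : Type u}
    [AddCommGroup N] [Module S N] [AddCommGroup B] [Module S B] (g : N →ₗ[S] B) :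
    RTensor S M N →ₗ[ℤ] RTensor S M B :=
  Submodule.mapQ _ _ (TensorProduct.map LinearMap.id g.toAddMonoidHom.toIntLinearMap)
    (by
      rw [tensorRel, Submodule.span_le]
      rintro x ⟨m, r, n, rfl⟩
      simp only [SetLike.mem_coe, Submodule.mem_comap, map_sub, TensorProduct.map_tmul,
        LinearMap.id_apply, AddMonoidHom.coe_toIntLinearMap, LinearMap.toAddMonoidHom_coe]
      show (TensorProduct.map LinearMap.id g.toAddMonoidHom.toIntLinearMap)
        ((op r • m) ⊗ₜ[ℤ] n - m ⊗ₜ[ℤ] (r • n)) ∈ tensorRel S M B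
      rw [map_sub, TensorProduct.map_tmul, TensorProduct.map_tmul]
      simp only [LinearMap.id_apply, AddMonoidHom.coe_toIntLinearMap,
        LinearMap.toAddMonoidHom_coe, map_smul]
      exact Submodule.subset_span ⟨m, r, g n, rfl⟩)

/-- Functoriality of `- ⊗_S N` in the right-module variable. -/
noncomputable def lTensorMap {M B : Type u} [AddCommGroup M] [Module Sᵐᵒᵖ M] [AddCommGroup B]
    [Module Sᵐᵒᵖ B] (h : M →ₗ[Sᵐᵒᵖ] B) (N : Type u) [AddCommGroup N] [Module S N] :
    RTensor S M N →ₗ[ℤ] RTensor S B N :=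
  Submodule.mapQ _ _ (TensorProduct.map h.toAddMonoidHom.toIntLinearMap LinearMap.id)
    (by
      rw [tensorRel, Submodule.span_le]
      rintro x ⟨m, r, n, rfl⟩
      simp only [SetLike.mem_coe, Submodule.mem_comap, map_sub, TensorProduct.map_tmul,
        LinearMap.id_apply, AddMonoidHom.coe_toIntLinearMap, LinearMap.toAddMonoidHom_coe]
      show (TensorProduct.map h.toAddMonoidHom.toIntLinearMap LinearMap.id)
        ((op r • m) ⊗ₜ[ℤ] n - m ⊗ₜ[ℤ] (r • n)) ∈ tensorRel S B N
      rw [map_sub, TensorProduct.map_tmul, TensorProduct.map_tmul]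
      simp only [LinearMap.id_apply, AddMonoidHom.coe_toIntLinearMap,
        LinearMap.toAddMonoidHom_coe, map_smul]
      exact Submodule.subset_span ⟨h m, r, n, rfl⟩)

end Tensor

/-! Basic relative homological notions -/

section Defs

variable (S : Type u) [Ring S]

/-- `M` is `N`-subinjective: every map `N → M` extends along every embedding of `N`. -/
def Subinjective (N M : Type u) [AddCommGroup N] [Module S N] [AddCommGroup M]
    [Module S M] : Prop :=
  ∀ (K : Type u) [AddCommGroup K] [Module S K] (i : N →ₗ[S] K), Function.Injective i →
    ∀ f : N →ₗ[S] M, ∃ h : K →ₗ[S] M, h ∘ₗ i = f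

/-- `M` is an injective module. -/
def InjMod (M : Type u) [AddCommGroup M] [Module S M] : Prop :=
  ∀ (N : Type u) [AddCommGroup N] [Module S N], Subinjective S N M

/-- `M` is `N`-subprojective. -/
def Subprojective (M N : Type u) [AddCommGroup M] [Module S M] [AddCommGroup N]
    [Module S N] : Prop :=
  ∀ (B : Type u) [AddCommGroup B] [Module S B] (g : B →ₗ[S] N), Function.Surjective g →
    ∀ f : M →ₗ[S] N, ∃ h : M →ₗ[S] B, g ∘ₗ h = f

/-- A monomorphism of left `S`-modules is pure if it stays injective after
tensoring with any right `S`-module. -/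
def IsPureMono {A B : Type u} [AddCommGroup A] [Module S A] [AddCommGroup B] [Module S B]
    (i : A →ₗ[S] B) : Prop :=
  Function.Injective i ∧
    ∀ (M : Type u) [AddCommGroup M] [Module Sᵐᵒᵖ M], Function.Injective (rTensorMap S M i)

/-- `N` is absolutely pure (fp-injective): every embedding of `N` is pure. -/
def AbsPure (N : Type u) [AddCommGroup N] [Module S N] : Prop :=
  ∀ (K : Type u) [AddCommGroup K] [Module S K] (i : N →ₗ[S] K), Function.Injective i →
    IsPureMono S i

/-- `N` is absolutely `M`-pure, for a right module `M`. -/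
def AbsMPure (M : Type u) [AddCommGroup M] [Module Sᵐᵒᵖ M] (N : Type u) [AddCommGroup N]
    [Module S N] : Prop :=
  ∀ (B : Type u) [AddCommGroup B] [Module S B] (i : N →ₗ[S] B), Function.Injective i →
    Function.Injective (rTensorMap S M i)

/-- `M` is pure-injective: maps into `M` extend along pure monomorphisms. -/
def PureInjective (M : Type u) [AddCommGroup M] [Module S M] : Prop :=
  ∀ (A B : Type u) [AddCommGroup A] [Module S A] [AddCommGroup B] [Module S B]
    (i : A →ₗ[S] B), IsPureMono S i → ∀ f : A →ₗ[S] M, ∃ h : B →ₗ[S] M, h ∘ₗ i = f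

/-- `M` is indigent: its subinjectivity domain is exactly the injective modules. -/
def Indigent (M : Type u) [AddCommGroup M] [Module S M] : Prop :=
  ∀ (N : Type u) [AddCommGroup N] [Module S N], Subinjective S N M ↔ InjMod S N

/-- `M` is pi-indigent: `M` is pure-injective and its subinjectivity domain is exactly
the absolutely pure modules. -/
def PiIndigent (M : Type u) [AddCommGroup M] [Module S M] : Prop :=
  PureInjective S M ∧
    ∀ (N : Type u) [AddCommGroup N] [Module S N], Subinjective S N M ↔ AbsPure S N

/-- Flatness via the equational criterion. -/
def FlatMod (M : Type u) [AddCommGroup M] [Module S M] : Prop :=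
  ∀ (n : ℕ) (r : Fin n → S) (x : Fin n → M), (∑ i, r i • x i) = 0 →
    ∃ (m : ℕ) (a : Fin n → Fin m → S) (y : Fin m → M),
      (∀ i, x i = ∑ j, a i j • y j) ∧ ∀ j, (∑ i, r i * a i j) = 0

/-- Finitely presented module. -/
def FPMod (M : Type u) [AddCommGroup M] [Module S M] : Prop :=
  ∃ (n : ℕ) (K : Submodule S (Fin n → S)), K.FG ∧
    Nonempty ((((Fin n → S)) ⧸ K) ≃ₗ[S] M)

/-- `Ext¹_S(M, N) = 0`, expressed by the splitting of every extension of `N` by `M`. -/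
def ExtVanish (M N : Type u) [AddCommGroup M] [Module S M] [AddCommGroup N] [Module S N] :
    Prop :=
  ∀ (B : Type u) [AddCommGroup B] [Module S B] (i : N →ₗ[S] B) (p : B →ₗ[S] M),
    Function.Injective i → Function.Surjective p → LinearMap.range i = LinearMap.ker p →
      ∃ s : M →ₗ[S] B, p ∘ₗ s = LinearMap.id

/-- `Tor₁^S(N, T) = 0` for a right module `N` and a left module `T`. -/
def TorVanish (N : Type u) [AddCommGroup N] [Module Sᵐᵒᵖ N] (T : Type u) [AddCommGroup T]
    [Module S T] : Prop :=
  ∀ (P K : Type u) [AddCommGroup P] [Module Sᵐᵒᵖ P] [AddCommGroup K] [Module Sᵐᵒᵖ K]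
    (i : K →ₗ[Sᵐᵒᵖ] P) (p : P →ₗ[Sᵐᵒᵖ] N), Module.Projective Sᵐᵒᵖ P →
      Function.Injective i → Function.Surjective p →
        LinearMap.range i = LinearMap.ker p → Function.Injective (lTensorMap S i T)

/-- `M` is a Whitehead test module for injectivity (i-test). -/
def ITest (M : Type u) [AddCommGroup M] [Module S M] : Prop :=
  ∀ (N : Type u) [AddCommGroup N] [Module S N], ExtVanish S M N → InjMod S N

/-- `S` is (left) n-saturated: `S` is not semisimple and every finitely generated
non-projective module is i-test. -/
def NSaturated : Prop :=
  ¬ IsSemisimpleRing S ∧ ∀ (M : Type u) [AddCommGroup M] [Module S M],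
    Module.Finite S M → ¬ Module.Projective S M → ITest S M

/-- A submodule is essential if it intersects every nonzero submodule nontrivially. -/
def EssentialIn {M : Type u} [AddCommGroup M] [Module S M] (A : Submodule S M) : Prop :=
  ∀ B : Submodule S M, B ≠ ⊥ → A ⊓ B ≠ ⊥

/-- `M` is a singular module: every element is annihilated by an essential left ideal. -/
def SingularMod (M : Type u) [AddCommGroup M] [Module S M] : Prop :=
  ∀ x : M, EssentialIn S (LinearMap.ker (LinearMap.toSpanSingleton S M x))

/-- `S` is (left) nonsingular: `Z(S) = 0`. -/
def NonsingularRing : Prop :=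
  ∀ r : S, EssentialIn S (LinearMap.ker (LinearMap.toSpanSingleton S S r)) → r = 0

/-- The socle of a module: the supremum of its simple submodules. -/
def socle (M : Type u) [AddCommGroup M] [Module S M] : Submodule S M :=
  sSup {N : Submodule S M | IsAtom N}

/-- von Neumann regular ring. -/
def IsVNR : Prop := ∀ a : S, ∃ r : S, a * r * a = a

/-- (left) V-ring: every simple module is injective. -/
def VRing : Prop :=
  ∀ (M : Type u) [AddCommGroup M] [Module S M], IsSimpleModule S M → InjMod S M

/-- (left) hereditary: every left ideal is projective. -/
def HereditaryRing : Prop := ∀ I : Submodule S S, Module.Projective S I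

/-- (left) semihereditary: every finitely generated left ideal is projective. -/
def SemihereditaryRing : Prop := ∀ I : Submodule S S, I.FG → Module.Projective S I

/-- (left) SI-ring: every singular module is injective. -/
def SIRing : Prop :=
  ∀ (M : Type u) [AddCommGroup M] [Module S M], SingularMod S M → InjMod S M

/-- quasi-Frobenius ring: two-sided Noetherian and self-injective. -/
def QFRing : Prop :=
  IsNoetherianRing S ∧ IsNoetherianRing Sᵐᵒᵖ ∧ InjMod S S ∧ InjMod Sᵐᵒᵖ S

/-- A module is uniserial if its submodules are totally ordered. -/
def Uniserial (M : Type u) [AddCommGroup M] [Module S M] : Prop :=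
  ∀ A B : Submodule S M, A ≤ B ∨ B ≤ A

/-- (left) serial ring: `S` is a finite direct sum of uniserial left ideals. -/
def SerialRing : Prop :=
  ∃ (n : ℕ) (f : Fin n → Submodule S S), (∀ i, Uniserial S (f i)) ∧
    iSupIndep f ∧ iSup f = ⊤

/-- (left) coherent: every finitely generated left ideal is finitely presented. -/
def CoherentRing : Prop := ∀ I : Submodule S S, I.FG → FPMod S I

/-- Indecomposable ring: no nontrivial central idempotents. -/
def IndecompRing : Prop :=
  Nontrivial S ∧ ∀ e : S, e * e = e → (∀ r : S, e * r = r * e) → e = 0 ∨ e = 1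

end Defs
/-- An embedding of `N` into an absolutely pure module which stays injective
after tensoring with the right module `M`. -/
structure AbsPureEmbedding (R : Type u) [Ring R] (M N : Type u) [AddCommGroup M]
    [Module Rᵐᵒᵖ M] [AddCommGroup N] [Module R N] : Type (u + 1) where
  B : Type u
  [addB : AddCommGroup B]
  [modB : Module R B]
  j : N →ₗ[R] B
  inj : Function.Injective j
  abs : AbsPure R B
  tensorInj : Function.Injective (rTensorMap R M j)

/-! Let `N → C` be any embedding. If `E` is injective, `N → E` extends to `C → E`; if `E` is
absolutely pure, `E` embeds purely into the pushout `P` of `E ← N → C`. Either way `N → C` is the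
first factor of a composite on which `M ⊗ -` is injective, hence `M ⊗ -` is injective on it. -/

section

variable {R : Type u} [Ring R] (M : Type u) [AddCommGroup M] [Module Rᵐᵒᵖ M]
  {N B C : Type u} [AddCommGroup N] [Module R N] [AddCommGroup B] [Module R B]
  [AddCommGroup C] [Module R C]

theorem rTensorMap_comp (f : N →ₗ[R] B) (g : B →ₗ[R] C) :
    rTensorMap R M (g ∘ₗ f) = rTensorMap R M g ∘ₗ rTensorMap R M f :=
  Submodule.linearMap_qext _ (TensorProduct.ext' fun _ _ => rfl)

theorem rTensorMap_id : rTensorMap R M (LinearMap.id : N →ₗ[R] N) = LinearMap.id :=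
  Submodule.linearMap_qext _ (TensorProduct.ext' fun _ _ => rfl)

theorem injective_rTensorMap_of_comp (f : N →ₗ[R] B) (g : B →ₗ[R] C)
    (h : Function.Injective (rTensorMap R M (g ∘ₗ f))) :
    Function.Injective (rTensorMap R M f) := by
  rw [rTensorMap_comp, LinearMap.coe_comp] at h
  exact h.of_comp

theorem injective_rTensorMap_of_comp_eq_id (f : N →ₗ[R] B) (g : B →ₗ[R] N)
    (h : g ∘ₗ f = LinearMap.id) : Function.Injective (rTensorMap R M f) :=
  injective_rTensorMap_of_comp M f g (by rw [h, rTensorMap_id]; exact Function.injective_id)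

end

theorem InjMod.absPure {R : Type u} [Ring R] {E : Type u} [AddCommGroup E] [Module R E]
    (hE : InjMod R E) : AbsPure R E := fun K _ _ i hi =>
  ⟨hi, fun M _ _ =>
    let ⟨h, hh⟩ := hE E K i hi LinearMap.id
    injective_rTensorMap_of_comp_eq_id M i h hh⟩

section Pushout

variable {R : Type u} [Ring R] {N B C : Type u} [AddCommGroup N] [Module R N]
  [AddCommGroup B] [Module R B] [AddCommGroup C] [Module R C]
  (f : N →ₗ[R] B) (g : N →ₗ[R] C)

abbrev Pushout : Type u := (B × C) ⧸ LinearMap.range (f.prod (-g))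

def Pushout.inl : B →ₗ[R] Pushout f g :=
  (LinearMap.range (f.prod (-g))).mkQ ∘ₗ LinearMap.inl R B C

def Pushout.inr : C →ₗ[R] Pushout f g :=
  (LinearMap.range (f.prod (-g))).mkQ ∘ₗ LinearMap.inr R B C

theorem Pushout.inl_comp_eq_inr_comp : Pushout.inl f g ∘ₗ f = Pushout.inr f g ∘ₗ g := by
  ext n
  refine (Submodule.Quotient.eq _).mpr ⟨n, ?_⟩
  simp

theorem Pushout.inl_injective (hg : Function.Injective g) :
    Function.Injective (Pushout.inl f g) := by
  refine (injective_iff_map_eq_zero _).mpr fun b hb => ?_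
  obtain ⟨n, hn⟩ := (Submodule.Quotient.mk_eq_zero _).mp hb
  have hn0 : n = 0 := hg (by simpa using congrArg Prod.snd hn)
  simpa [hn0] using (congrArg Prod.fst hn).symm

end Pushout

section AbsMPure

variable {R : Type u} [Ring R] {M : Type u} [AddCommGroup M] [Module Rᵐᵒᵖ M]
  {N B : Type u} [AddCommGroup N] [Module R N] [AddCommGroup B] [Module R B]

theorem AbsMPure.of_injMod (hB : InjMod R B) (j : N →ₗ[R] B)
    (hj : Function.Injective (rTensorMap R M j)) : AbsMPure R M N := by
  intro C _ _ i hi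
  obtain ⟨h, hh⟩ := hB N C i hi j
  exact injective_rTensorMap_of_comp M i h (hh ▸ hj)

theorem AbsMPure.of_absPure (hB : AbsPure R B) (j : N →ₗ[R] B)
    (hj : Function.Injective (rTensorMap R M j)) : AbsMPure R M N := by
  intro C _ _ i hi
  have hpure := (hB _ (Pushout.inl j i) (Pushout.inl_injective j i hi)).2 M
  have hcomp : Function.Injective (rTensorMap R M (Pushout.inl j i ∘ₗ j)) := by
    rw [rTensorMap_comp, LinearMap.coe_comp]
    exact hpure.comp hj
  rw [Pushout.inl_comp_eq_inr_comp] at hcomp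
  exact injective_rTensorMap_of_comp M i _ hcomp

end AbsMPure

theorem stmt_10_general {R : Type u} [Ring R] (M N E : Type u) [AddCommGroup M]
    [Module Rᵐᵒᵖ M] [AddCommGroup N] [Module R N] [AddCommGroup E] [Module R E]
    (i : N →ₗ[R] E) (hi : Function.Injective i) (hE : InjMod R E) :
    (AbsMPure R M N ↔ Function.Injective (rTensorMap R M i)) ∧
    (AbsMPure R M N ↔ Nonempty (AbsPureEmbedding R M N)) :=
  ⟨⟨fun h => h E i hi, AbsMPure.of_injMod hE i⟩,
    ⟨fun h => ⟨⟨E, i, hi, hE.absPure, h E i hi⟩⟩,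
      fun ⟨e⟩ => letI := e.addB; letI := e.modB; AbsMPure.of_absPure e.abs e.j e.tensorInj⟩⟩

theorem stmt_10 {R : Type u} [Ring R] (M N E : Type u) [AddCommGroup M]
    [Module Rᵐᵒᵖ M] [AddCommGroup N] [Module R N] [AddCommGroup E] [Module R E]
    (i : N →ₗ[R] E) (hi : Function.Injective i) (hE : InjMod R E)
    (hess : EssentialIn R (LinearMap.range i)) :
    (AbsMPure R M N ↔ Function.Injective (rTensorMap R M i)) ∧
    (AbsMPure R M N ↔ Nonempty (AbsPureEmbedding R M N)) :=
  stmt_10_general M N E i hi hE
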